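/- For distinct leaves v, w of a finite subtree T of T_K (with respective unique T-neighbors v', w'), the vertex sets of A_{v'}[v] and A_{w'}[w] are disjoint. -/
import Mathlib


/-- The connected component of `x` in `G` with the vertex `y` deleted:
for adjacent `x, y` this is the set `A_y[x]` of the paper. -/
def branch {V : Type*} (G : SimpleGraph V) (y x : V) : Set V :=
  {u | ∃ p : G.Walk x u, y ∉ p.support}

/-- If `v` is a leaf of `T` with unique `T`-neighbor `v'`, then any nontrivial path
from `v` staying inside `T` starts with the edge `s(v, v')`. -/
lemma leaf_edge_mem {V : Type*} {G : SimpleGraph V} {T : Finset V} {v v' b : V}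
    (hvb : v ≠ b) (hvleaf : ∀ u ∈ T, G.Adj v u → u = v')
    (p : G.Walk v b) (hsupp : ∀ x ∈ p.support, x ∈ T) :
    s(v, v') ∈ p.edges := by
  cases p with
  | nil => exact absurd rfl hvb
  | cons h q =>
    rename_i x
    have hxT : x ∈ T := hsupp x (by simp)
    have hx : x = v' := hvleaf x hxT h
    subst hx
    simp

/-- For distinct leaves `v, w` of a finite subtree `T` of the tree `G` (with respective
unique `T`-neighbors `v', w'`), the vertex sets `A_{v'}[v]` and `A_{w'}[w]` are
disjoint. -/
theorem stmt_11 {V : Type*} (G : SimpleGraph V) (hconn : G.Connected)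
    (hac : G.IsAcyclic)
    (T : Finset V) (h2 : 2 ≤ T.card)
    (hTconn : ∀ a ∈ T, ∀ b ∈ T, ∃ p : G.Walk a b, ∀ x ∈ p.support, x ∈ T)
    (v w v' w' : V) (hvw : v ≠ w)
    (hvT : v ∈ T) (hv'T : v' ∈ T) (hvadj : G.Adj v v')
    (hvleaf : ∀ u ∈ T, G.Adj v u → u = v')
    (hwT : w ∈ T) (hw'T : w' ∈ T) (hwadj : G.Adj w w')
    (hwleaf : ∀ u ∈ T, G.Adj w u → u = w') :
    branch G v' v ∩ branch G w' w = ∅ := by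
  rw [Set.eq_empty_iff_forall_notMem]
  rintro u ⟨⟨p, hp⟩, ⟨q, hq⟩⟩
  classical
  -- bypass paths from the leaves to u
  set pu := p.bypass with hpu_def
  set qu := q.bypass with hqu_def
  have hpu : pu.IsPath := p.bypass_isPath
  have hqu : qu.IsPath := q.bypass_isPath
  have hpv' : v' ∉ pu.support := fun h => hp (p.support_bypass_subset h)
  have hqw' : w' ∉ qu.support := fun h => hq (q.support_bypass_subset h)
  -- the path `v → w` inside `T`
  obtain ⟨pt, hptT⟩ := hTconn v hvT w hwT
  set PT := pt.bypass with hPT_def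
  have hPT : PT.IsPath := pt.bypass_isPath
  have hPTT : ∀ x ∈ PT.support, x ∈ T := fun x hx => hptT x (pt.support_bypass_subset hx)
  -- `PT` starts with the edge `s(v, v')` and ends with the edge `s(w, w')`
  have hev : s(v, v') ∈ PT.edges := leaf_edge_mem hvw hvleaf PT hPTT
  have hew : s(w, w') ∈ PT.reverse.edges := by
    refine leaf_edge_mem (Ne.symm hvw) hwleaf PT.reverse ?_
    intro x hx
    exact hPTT x (by rwa [SimpleGraph.Walk.support_reverse, List.mem_reverse] at hx)
  -- the combined walk `v → u → w`; its bypass equals `PT` by uniqueness of paths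
  have hcomb : (pu.append qu.reverse).bypass = PT := by
    have := hac.path_unique ⟨(pu.append qu.reverse).bypass, (pu.append qu.reverse).bypass_isPath⟩
      ⟨PT, hPT⟩
    exact congrArg Subtype.val this
  have hev' : s(v, v') ∈ pu.edges ∨ s(v, v') ∈ qu.edges := by
    have h1 : s(v, v') ∈ (pu.append qu.reverse).edges := by
      rw [← hcomb] at hev
      exact (pu.append qu.reverse).edges_bypass_subset hev
    rw [SimpleGraph.Walk.edges_append, List.mem_append, SimpleGraph.Walk.edges_reverse,
      List.mem_reverse] at h1
    exact h1
  have hevq : s(v, v') ∈ qu.edges := by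
    rcases hev' with h1 | h1
    · exact absurd (pu.snd_mem_support_of_mem_edges h1) hpv'
    · exact h1
  -- so `v` lies on `qu`; the initial segment of `qu` up to `v` is the unique path `w → v`
  have hvq : v ∈ qu.support := qu.fst_mem_support_of_mem_edges hevq
  have htake : qu.takeUntil v hvq = PT.reverse := by
    have := hac.path_unique ⟨qu.takeUntil v hvq, hqu.takeUntil hvq⟩ ⟨PT.reverse, hPT.reverse⟩
    exact congrArg Subtype.val this
  have hw'q : s(w, w') ∈ qu.edges := by
    rw [← htake] at hew
    exact qu.edges_takeUntil_subset hvq hew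
  exact hqw' (qu.snd_mem_support_of_mem_edges hw'q)
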